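/- Let u = e_{n+1} and v = e_0 + √2 e_1 + (1+i) e_n in C^{n+2} (p, q ≥ 1). Then u and v are m-null with m(u,v) ≠ 0, and there is no pair (Z, z) ∈ C^{n*} × R such that s_{Z,z} either preserves both lines <u>, <v> or swaps the two lines <u>, <v>. -/

import Mathlib

/-! The last row of `s_{Z,z}` is `(0, …, 0, -1)`, so `s_{Z,z} w` has last coordinate `-w_{n+1}`;
as `u_{n+1} = 1` and `v_{n+1} = 0`, no `s_{Z,z}` maps `u` into `⟨v⟩`. The image of `u = e_{n+1}`
is the last column `(iz + ½ZIZ*, -IZ*, -1)`, which lies in `⟨u⟩` only if `Z = 0`. But on vectors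
with vanishing last coordinate `s_{0,z}` is `-1` on the `e_0`-coordinate and the identity on the
middle ones, so it cannot map `v`, which has nonzero coordinates of both kinds, into `⟨v⟩`. -/

open Complex Matrix ComplexConjugate

noncomputable section

/-- signature entries of the diagonal matrix `I = diag(1^p, (-1)^q)`. -/
def sgnCR (p k : ℕ) : ℂ := if k < p then 1 else -1

/-- safe indexing of a vector `Z : Fin n → ℂ` by a natural number. -/
def vx {n : ℕ} (Z : Fin n → ℂ) (k : ℕ) : ℂ := if h : k < n then Z ⟨k, h⟩ else 0

/-- the pseudo-Hermitian form `m` of signature `(p+1, q+1)` on `ℂ^{n+2}`. -/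
def mForm (n p : ℕ) (u v : Fin (n + 2) → ℂ) : ℂ :=
  u ⟨0, by omega⟩ * conj (v ⟨n + 1, by omega⟩) + u ⟨n + 1, by omega⟩ * conj (v ⟨0, by omega⟩)
    + ∑ k : Fin n, sgnCR p k.val * (u ⟨k.val + 1, by omega⟩ * conj (v ⟨k.val + 1, by omega⟩))

/-- the matrix `s_{Z,z}` with rows `(-1, -Z, iz + ½ Z I Z^*)`, `(0, E, -I Z^*)`, `(0, 0, -1)`. -/
def sMat (n p : ℕ) (Z : Fin n → ℂ) (z : ℝ) : Matrix (Fin (n + 2)) (Fin (n + 2)) ℂ :=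
  Matrix.of fun i j =>
    if i.val = 0 then
      if j.val = 0 then -1
      else if j.val = n + 1 then
        Complex.I * z + (1 / 2) * ∑ k : Fin n, Z k * sgnCR p k.val * conj (Z k)
      else -vx Z (j.val - 1)
    else if i.val = n + 1 then
      if j.val = n + 1 then -1 else 0
    else
      if j.val = 0 then 0
      else if j.val = n + 1 then -(sgnCR p (i.val - 1) * conj (vx Z (i.val - 1)))
      else if i = j then 1 else 0

theorem Fin.sum_univ_add_two {M : Type*} [AddCommMonoid M] {n : ℕ} (f : Fin (n + 2) → M) :
    ∑ j, f j = f 0 + ∑ k : Fin n, f k.castSucc.succ + f (Fin.last (n + 1)) := by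
  rw [Fin.sum_univ_succ, Fin.sum_univ_castSucc (fun i => f i.succ)]
  exact (add_assoc _ _ _).symm

@[simp] theorem Fin.val_ne_self {n : ℕ} (k : Fin n) : (k : ℕ) ≠ n := k.isLt.ne

theorem sgnCR_ne_zero (p k : ℕ) : sgnCR p k ≠ 0 := by
  unfold sgnCR; split <;> norm_num

theorem mForm_apply {n : ℕ} (p : ℕ) (u v : Fin (n + 2) → ℂ) :
    mForm n p u v = u 0 * conj (v (Fin.last _)) + u (Fin.last _) * conj (v 0)
      + ∑ k : Fin n, sgnCR p k * (u k.castSucc.succ * conj (v k.castSucc.succ)) :=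
  rfl

section sMat

variable {n p : ℕ} (Z : Fin n → ℂ) (z : ℝ) (w : Fin (n + 2) → ℂ)

theorem sMat_mulVec_zero :
    (sMat n p Z z *ᵥ w) 0 = -w 0 - ∑ k, Z k * w k.castSucc.succ
      + (Complex.I * z + (1 / 2) * ∑ k : Fin n, Z k * sgnCR p k * conj (Z k))
        * w (Fin.last _) := by
  simp [mulVec, dotProduct, Fin.sum_univ_add_two, sMat, vx]
  ring

theorem sMat_mulVec_castSucc_succ (k : Fin n) :
    (sMat n p Z z *ᵥ w) k.castSucc.succ
      = w k.castSucc.succ - sgnCR p k * conj (Z k) * w (Fin.last _) := by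
  simp [mulVec, dotProduct, Fin.sum_univ_add_two, sMat, vx, sub_eq_add_neg]

theorem sMat_mulVec_last : (sMat n p Z z *ᵥ w) (Fin.last _) = -w (Fin.last _) := by
  simp [mulVec, dotProduct, Fin.sum_univ_add_two, sMat]

variable {Z z w}

theorem eq_zero_of_sMat_mulVec_eq_smul {c : ℂ} (hmid : ∀ k : Fin n, w k.castSucc.succ = 0)
    (hlast : w (Fin.last _) ≠ 0) (h : sMat n p Z z *ᵥ w = c • w) : Z = 0 := by
  funext k
  have hk := congrFun h k.castSucc.succ
  rw [sMat_mulVec_castSucc_succ, Pi.smul_apply, hmid, smul_zero, zero_sub, neg_eq_zero] at hk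
  simpa [sgnCR_ne_zero, hlast] using hk

theorem sMat_zero_mulVec_ne_smul (d : ℂ) (k : Fin n) (h0 : w 0 ≠ 0) (hk : w k.castSucc.succ ≠ 0)
    (hlast : w (Fin.last _) = 0) : sMat n p 0 z *ᵥ w ≠ d • w := by
  intro h
  have hd_one : d = 1 := by
    have := congrFun h k.castSucc.succ
    rw [sMat_mulVec_castSucc_succ, hlast, Pi.smul_apply, smul_eq_mul] at this
    simpa [hk] using this
  have hd_neg_one : d = -1 := by
    have := congrFun h 0
    simp only [sMat_mulVec_zero, hlast, Pi.smul_apply, smul_eq_mul, Pi.zero_apply, zero_mul,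
      Finset.sum_const_zero, mul_zero, sub_zero, add_zero] at this
    exact mul_right_cancel₀ h0 (by linear_combination -this)
  norm_num [hd_one] at hd_neg_one

theorem sMat_mulVec_ne_smul_of_last {c : ℂ} {w' : Fin (n + 2) → ℂ} (hw : w (Fin.last _) ≠ 0)
    (hw' : w' (Fin.last _) = 0) : sMat n p Z z *ᵥ w ≠ c • w' := by
  intro h
  have := congrFun h (Fin.last _)
  rw [sMat_mulVec_last, Pi.smul_apply, hw', smul_zero, neg_eq_zero] at this
  exact hw this

end sMat

section Example

variable {n : ℕ}

-- The vectors `u`, `v` of the statement, with the same bodies as its `let`s.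
def uVec (n : ℕ) : Fin (n + 2) → ℂ := fun j => if j.val = n + 1 then 1 else 0

def vVec (n : ℕ) : Fin (n + 2) → ℂ := fun j =>
  if j.val = 0 then 1 else if j.val = 1 then (Real.sqrt 2 : ℂ)
  else if j.val = n then 1 + Complex.I else 0

@[simp] theorem uVec_zero : uVec n 0 = 0 := by simp [uVec]

@[simp] theorem uVec_last : uVec n (Fin.last _) = 1 := by simp [uVec]

@[simp] theorem uVec_castSucc_succ (k : Fin n) : uVec n k.castSucc.succ = 0 := by
  simp [uVec]

@[simp] theorem vVec_zero : vVec n 0 = 1 := by simp [vVec]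

theorem vVec_last (hn : n ≠ 0) : vVec n (Fin.last _) = 0 := by simp [vVec, hn]

theorem mForm_uVec_self (p : ℕ) : mForm n p (uVec n) (uVec n) = 0 := by
  simp [mForm_apply]

theorem mForm_uVec_vVec (p : ℕ) : mForm n p (uVec n) (vVec n) = 1 := by
  simp [mForm_apply]

theorem mForm_vVec_self {p : ℕ} (hp : 1 ≤ p) (hq : p + 1 ≤ n) :
    mForm n p (vVec n) (vVec n) = 0 := by
  rw [mForm_apply, vVec_last (by omega), Fintype.sum_eq_add ⟨0, by omega⟩ ⟨n - 1, by omega⟩]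
  · have hsqrt : (Real.sqrt 2 : ℂ) * Real.sqrt 2 = 2 := by
      rw [← Complex.ofReal_mul, Real.mul_self_sqrt zero_le_two, Complex.ofReal_ofNat]
    simp [vVec, sgnCR, hsqrt, show 0 < p by omega, show n ≠ 0 by omega, show n ≠ 1 by omega,
      show ¬ n - 1 < p by omega, show n - 1 + 1 = n by omega]
    linear_combination Complex.I_sq
  · simp [Fin.ext_iff]; omega
  · rintro k ⟨hk0, hkn⟩
    have h0 : (k : ℕ) ≠ 0 := fun h => hk0 (Fin.ext h)
    have h1 : (k : ℕ) + 1 ≠ n := fun h => hkn (Fin.ext (by simp; omega))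
    simp [vVec, h0, h1]

end Example

theorem example_nonisotropic_general (n p : ℕ) (hp : 1 ≤ p) (hq : p + 1 ≤ n) :
    let u : Fin (n + 2) → ℂ := fun j => if j.val = n + 1 then 1 else 0
    let v : Fin (n + 2) → ℂ := fun j =>
      if j.val = 0 then 1 else if j.val = 1 then (Real.sqrt 2 : ℂ)
      else if j.val = n then 1 + Complex.I else 0
    mForm n p u u = 0 ∧ mForm n p v v = 0 ∧ mForm n p u v ≠ 0 ∧
    ¬∃ (Z : Fin n → ℂ) (z : ℝ),
      (((∃ c : ℂ, (sMat n p Z z).mulVec u = c • u) ∧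
        (∃ d : ℂ, (sMat n p Z z).mulVec v = d • v)) ∨
       ((∃ c : ℂ, (sMat n p Z z).mulVec u = c • v) ∧
        (∃ d : ℂ, (sMat n p Z z).mulVec v = d • u))) := by
  refine ⟨mForm_uVec_self p, mForm_vVec_self hp hq,
    ne_of_eq_of_ne (mForm_uVec_vVec p) one_ne_zero, ?_⟩
  rintro ⟨Z, z, ⟨⟨c, hc⟩, d, hd⟩ | ⟨⟨c, hc⟩, -⟩⟩
  · obtain rfl : Z = 0 := eq_zero_of_sMat_mulVec_eq_smul (w := uVec n) (by simp) (by simp) hc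
    exact sMat_zero_mulVec_ne_smul (w := vVec n) d ⟨0, by omega⟩ (by simp) (by simp [vVec])
      (vVec_last (by omega)) hd
  · exact sMat_mulVec_ne_smul_of_last (w := uVec n) (w' := vVec n) (by simp)
      (vVec_last (by omega)) hc

/-- for `u = e_{n+1}` and `v = e₀ + √2 e₁ + (1+i) e_n`, both are `m`-null
with `m(u,v) ≠ 0`, and there is no pair `(Z, z)` for which `s_{Z,z}` preserves both lines
`⟨u⟩`, `⟨v⟩` or swaps the two lines. -/
theorem example_nonisotropic (n p : ℕ) (hn : 2 ≤ n) (hp : 1 ≤ p) (hq : p + 1 ≤ n) :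
    let u : Fin (n + 2) → ℂ := fun j => if j.val = n + 1 then 1 else 0
    let v : Fin (n + 2) → ℂ := fun j =>
      if j.val = 0 then 1 else if j.val = 1 then (Real.sqrt 2 : ℂ)
      else if j.val = n then 1 + Complex.I else 0
    mForm n p u u = 0 ∧ mForm n p v v = 0 ∧ mForm n p u v ≠ 0 ∧
    ¬∃ (Z : Fin n → ℂ) (z : ℝ),
      (((∃ c : ℂ, (sMat n p Z z).mulVec u = c • u) ∧
        (∃ d : ℂ, (sMat n p Z z).mulVec v = d • v)) ∨
       ((∃ c : ℂ, (sMat n p Z z).mulVec u = c • v) ∧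
        (∃ d : ℂ, (sMat n p Z z).mulVec v = d • u))) :=
  example_nonisotropic_general n p hp hq
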